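/- arXiv:2303.05327 — 6 statements merged into one kernel-verified Lean document; each statement's English description precedes it below -/
import Mathlib

section
/- Let N ≥ 1 be a natural number and let m₀ = 3^(⌈log₃(4N³+1)⌉ + 1). Define h : ℤ → ZMod m₀ by h(a) = 2^{e(a)}, where e(a) is the unique integer in [0, φ(m₀)) congruent to a modulo φ(m₀). Then h is injective on the set of integers a with −2N³ ≤ a ≤ 2N³: if −2N³ ≤ a, b ≤ 2N³ and h(a) = h(b), then a = b. -/
/-!
Since `2 ^ φ(m₀) = 1`, the map `h` is just `a ↦ 2 ^ a` on the unit group of `ZMod m₀`, so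
`h a = h b` forces `orderOf 2 ∣ a - b`. With `m₀ = 3 ^ (k + 1)` and `3 ^ k ≥ 4N³ + 1 > |a - b|`,
it suffices that `orderOf 2 ≥ 3 ^ k`, which holds because `2 ^ 2 = 1 + 3` has order exactly
`3 ^ k` modulo `3 ^ (k + 1)`.
-/

theorem eq_of_zpow_eq_zpow_of_abs_sub_lt {G : Type*} [Group G] {x : G} {a b : ℤ}
    (h : x ^ a = x ^ b) (hab : |a - b| < orderOf x) : a = b := by
  have hdvd : (orderOf x : ℤ) ∣ b - a := (zpow_eq_zpow_iff_modEq.mp h).dvd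
  have := Int.eq_zero_of_abs_lt_dvd hdvd (by rwa [abs_sub_comm])
  omega

theorem ZMod.coe_zpow_unit_eq_pow_toNat_emod_totient {n : ℕ} [NeZero n] (u : (ZMod n)ˣ) (x : ℤ) :
    ((u ^ x : (ZMod n)ˣ) : ZMod n) = (u : ZMod n) ^ (x % (n.totient : ℤ)).toNat := by
  have hφ : (0 : ℤ) < n.totient := by exact_mod_cast Nat.totient_pos.mpr (Nat.pos_of_neZero n)
  rw [← Units.val_pow_eq_pow_val, ← zpow_natCast, Int.toNat_of_nonneg (Int.emod_nonneg x hφ.ne'),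
    ← ZMod.card_units_eq_totient, zpow_mod_card]

theorem ZMod.orderOf_four_three_pow (k : ℕ) : orderOf (4 : ZMod (3 ^ (k + 1))) = 3 ^ k := by
  convert ZMod.orderOf_one_add_prime Nat.prime_three (by norm_num) k using 2
  norm_num

theorem ZMod.three_pow_le_orderOf_of_coe_eq_two {k : ℕ} (u : (ZMod (3 ^ (k + 1)))ˣ)
    (hu : (u : ZMod (3 ^ (k + 1))) = 2) : 3 ^ k ≤ orderOf u := by
  have h4 : orderOf (u ^ 2) = 3 ^ k := by
    rw [← orderOf_units, Units.val_pow_eq_pow_val, hu, ← ZMod.orderOf_four_three_pow k]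
    norm_num
  exact h4 ▸ Nat.le_of_dvd (orderOf_pos u) (orderOf_pow_dvd 2)

theorem stmt_3_general (N : ℕ) (a b : ℤ)
    (ha₁ : -(2 * (N : ℤ) ^ 3) ≤ a) (ha₂ : a ≤ 2 * (N : ℤ) ^ 3)
    (hb₁ : -(2 * (N : ℤ) ^ 3) ≤ b) (hb₂ : b ≤ 2 * (N : ℤ) ^ 3)
    (hab :
      (fun x : ℤ => (2 : ZMod (3 ^ (Nat.clog 3 (4 * N ^ 3 + 1) + 1))) ^
          (x % (Nat.totient (3 ^ (Nat.clog 3 (4 * N ^ 3 + 1) + 1)) : ℤ)).toNat) a =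
      (fun x : ℤ => (2 : ZMod (3 ^ (Nat.clog 3 (4 * N ^ 3 + 1) + 1))) ^
          (x % (Nat.totient (3 ^ (Nat.clog 3 (4 * N ^ 3 + 1) + 1)) : ℤ)).toNat) b) :
    a = b := by
  set k := Nat.clog 3 (4 * N ^ 3 + 1)
  let u := ZMod.unitOfCoprime 2 (Nat.Coprime.pow_right (k + 1) (by decide : Nat.Coprime 2 3))
  have hu : (u : ZMod (3 ^ (k + 1))) = 2 := by simp [u]
  have huab : u ^ a = u ^ b := by
    ext
    rw [ZMod.coe_zpow_unit_eq_pow_toNat_emod_totient, ZMod.coe_zpow_unit_eq_pow_toNat_emod_totient, hu]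
    exact hab
  apply eq_of_zpow_eq_zpow_of_abs_sub_lt huab
  have hk : 4 * N ^ 3 + 1 ≤ 3 ^ k := Nat.le_pow_clog (by norm_num) _
  have hord := ZMod.three_pow_le_orderOf_of_coe_eq_two u hu
  have hord' : (4 * N ^ 3 + 1 : ℤ) ≤ orderOf u := by exact_mod_cast hk.trans hord
  rw [abs_lt]
  constructor <;> linarith

/-- Let `N ≥ 1` and `m₀ = 3 ^ (⌈log₃ (4N³+1)⌉ + 1)`. Define `h : ℤ → ZMod m₀` by
`h a = 2 ^ e a`, where `e a` is the unique natural number in `[0, φ m₀)` congruent to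
`a` modulo `φ m₀`. Then `h` is injective on the integers in `[-2N³, 2N³]`. -/
theorem stmt_3 (N : ℕ) (hN : 1 ≤ N) (a b : ℤ)
    (ha₁ : -(2 * (N : ℤ) ^ 3) ≤ a) (ha₂ : a ≤ 2 * (N : ℤ) ^ 3)
    (hb₁ : -(2 * (N : ℤ) ^ 3) ≤ b) (hb₂ : b ≤ 2 * (N : ℤ) ^ 3)
    (hab :
      (fun x : ℤ => (2 : ZMod (3 ^ (Nat.clog 3 (4 * N ^ 3 + 1) + 1))) ^
          (x % (Nat.totient (3 ^ (Nat.clog 3 (4 * N ^ 3 + 1) + 1)) : ℤ)).toNat) a =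
      (fun x : ℤ => (2 : ZMod (3 ^ (Nat.clog 3 (4 * N ^ 3 + 1) + 1))) ^
          (x % (Nat.totient (3 ^ (Nat.clog 3 (4 * N ^ 3 + 1) + 1)) : ℤ)).toNat) b) :
    a = b :=
  stmt_3_general N a b ha₁ ha₂ hb₁ hb₂ hab
end

section
/- Let R be a finite set of pairs over types α × β. For a ∈ α, let cnt(a) denote the number of pairs in R whose first coordinate is a, and let C = { cnt(a) : a is the first coordinate of some pair in R } be the finite set of distinct counts. Then |C|·(|C|+1) ≤ 2·|R|; in particular |R| ≥ |C|²/2. -/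
/-!
The counts `cnt a` over the first coordinates `a` sum to `|R|`, and each element of `C` occurs
among them at least once, so `∑ C ≤ |R|`. The elements of `C` are distinct positive integers,
hence `∑ C ≥ 1 + 2 + ⋯ + |C| = |C| (|C| + 1) / 2`.
-/

open Finset

namespace Finset

theorem card_mul_card_add_one_le_two_mul_sum {s : Finset ℕ} (hs : 0 ∉ s) :
    #s * (#s + 1) ≤ 2 * ∑ i ∈ s, i := by
  induction s using Finset.induction_on_max with
  | empty => simp
  | insert a t hlt ih =>
    have ha : a ∉ t := fun h => lt_irrefl a (hlt a h)
    have h0t : 0 ∉ t := fun h => hs (mem_insert_of_mem h)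
    have hsub : t ⊆ Ioo 0 a := fun x hx =>
      mem_Ioo.mpr ⟨Nat.pos_of_ne_zero (ne_of_mem_of_not_mem hx h0t), hlt x hx⟩
    have hcard : #t + 1 ≤ a := by
      have := card_le_card hsub
      rw [Nat.card_Ioo] at this
      have : a ≠ 0 := ne_of_mem_of_not_mem (mem_insert_self a t) hs
      omega
    rw [card_insert_of_notMem ha, sum_insert ha]
    nlinarith [ih h0t]

end Finset

theorem stmt_6_general {α β : Type*} [DecidableEq α] (R : Finset (α × β)) :
    (((R.image Prod.fst).image fun a => (R.filter fun p => p.1 = a).card).card) *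
        ((((R.image Prod.fst).image fun a => (R.filter fun p => p.1 = a).card).card) + 1) ≤
      2 * R.card := by
  set cnt : α → ℕ := fun a => #{p ∈ R | p.1 = a}
  have hpos : 0 ∉ (R.image Prod.fst).image cnt := by
    simp only [mem_image, not_exists, not_and]
    rintro _ ⟨p, hp, rfl⟩
    exact ((card_pos (s := {q ∈ R | q.1 = p.1})).mpr ⟨p, mem_filter.mpr ⟨hp, rfl⟩⟩).ne'
  calc _ ≤ 2 * ∑ c ∈ (R.image Prod.fst).image cnt, c :=
        card_mul_card_add_one_le_two_mul_sum hpos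
    _ ≤ 2 * ∑ a ∈ R.image Prod.fst, cnt a := by
        gcongr
        exact sum_image_le_of_nonneg fun _ _ => Nat.zero_le _
    _ = 2 * #R := by rw [card_eq_sum_card_image Prod.fst R]

/-- Let `R` be a finite set of pairs. For `a`, let `cnt a` be the number of pairs of `R`
with first coordinate `a`, and let `C` be the set of distinct counts `cnt a` over first
coordinates `a` of pairs of `R`. Then `|C| * (|C| + 1) ≤ 2 * |R|`. -/
theorem stmt_6 {α β : Type*} [DecidableEq α] [DecidableEq β] (R : Finset (α × β)) :
    (((R.image Prod.fst).image fun a => (R.filter fun p => p.1 = a).card).card) *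
        ((((R.image Prod.fst).image fun a => (R.filter fun p => p.1 = a).card).card) + 1) ≤
      2 * R.card :=
  stmt_6_general R
end

section
/- Let G be a tree on vertex set V, and let ℓ : V → Finset A be a labeling satisfying the running intersection property. Let W ⊆ V induce a connected subgraph of G, and let x₁, x₂ ∈ A be elements each occurring in the label ℓ(w) of some vertex w ∈ W. If there exists a vertex v ∈ V with {x₁, x₂} ⊆ ℓ(v), then there exists a vertex w ∈ W with {x₁, x₂} ⊆ ℓ(w). -/
/-!
The sets `S₁ = {v | x₁ ∈ ℓ v}`, `S₂ = {v | x₂ ∈ ℓ v}` and `W` are subtrees of `G` that pairwise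
meet, at `v`, `w₁` and `w₂` say. In a tree a connected vertex set contains the unique path
between any two of its vertices, and the three paths joining `v`, `w₁`, `w₂` pairwise share a
vertex, the median `m`. The paths `v ⇝ w₁ ⊆ S₁`, `v ⇝ w₂ ⊆ S₂` and `w₁ ⇝ w₂ ⊆ W` all pass
through `m`, so `m` is the required vertex of `W`.
-/

/-- A labeling `ℓ : V → Finset A` of the vertices of a graph `G` satisfies the running
intersection property if for every `a : A`, the set of vertices whose label contains `a`
is empty or induces a connected subgraph of `G`. -/
def RunningIntersection {V A : Type*} (G : SimpleGraph V) (ℓ : V → Finset A) : Prop :=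
  ∀ a : A, {v : V | a ∈ ℓ v} = ∅ ∨ (G.induce {v : V | a ∈ ℓ v}).Connected

namespace SimpleGraph.IsAcyclic

variable {V : Type*} {G : SimpleGraph V}

theorem support_subset_of_connected_induce (hG : G.IsAcyclic) {S : Set V}
    (hS : (G.induce S).Connected) {u v : V} (hu : u ∈ S) (hv : v ∈ S)
    {p : G.Walk u v} (hp : p.IsPath) : ∀ x ∈ p.support, x ∈ S := by
  classical
  obtain ⟨q⟩ := hS ⟨u, hu⟩ ⟨v, hv⟩
  let q' : G.Walk u v := q.map (Embedding.induce S).toHom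
  have hq' : ∀ x ∈ q'.support, x ∈ S := by
    intro x hx
    rw [show q'.support = q.support.map _ from Walk.support_map _ _] at hx
    obtain ⟨⟨y, hy⟩, -, rfl⟩ := List.mem_map.mp hx
    exact hy
  have hpq : p = q'.bypass :=
    congrArg Subtype.val ((hG.subsingleton_path u v).elim ⟨p, hp⟩ q'.toPath)
  intro x hx
  exact hq' x (q'.support_bypass_subset_support (hpq ▸ hx))

theorem exists_median (hG : G.IsAcyclic) {a b c : V}
    {p : G.Walk c a} {q : G.Walk c b} {r : G.Walk a b}
    (hp : p.IsPath) (hq : q.IsPath) (hr : r.IsPath) :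
    ∃ m, m ∈ p.support ∧ m ∈ q.support ∧ m ∈ r.support := by
  classical
  have hr_eq : r = (p.reverse.append q).bypass :=
    congrArg Subtype.val ((hG.subsingleton_path a b).elim ⟨r, hr⟩ (p.reverse.append q).toPath)
  have hr_sub : ∀ x ∈ r.support, x ∈ p.support ∨ x ∈ q.support := by
    intro x hx
    rw [hr_eq] at hx
    simpa using (p.reverse.append q).support_bypass_subset_support hx
  by_cases ha : a ∈ q.support
  · exact ⟨a, p.end_mem_support, ha, r.start_mem_support⟩
  -- `r` enters `q` along an edge `y x` with `y ∈ p \ q`; acyclicity puts `x` on `p` too.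
  obtain ⟨d, hd, hy, hx⟩ :=
    r.exists_boundary_dart {x | x ∉ q.support} ha (by simp)
  simp only [Set.mem_ofPred_eq, not_not] at hy hx
  have hyp : d.fst ∈ p.support :=
    (hr_sub _ (r.dart_fst_mem_support_of_mem_darts hd)).resolve_right hy
  have hxp : d.snd ∈ (p.takeUntil _ hyp).support :=
    hG.mem_support_of_ne_mem_support_of_adj_of_isPath (hp.takeUntil hyp) (hq.takeUntil hx)
      d.adj fun h ↦ hy (q.support_takeUntil_subset_support hx h)
  exact ⟨d.snd, p.support_takeUntil_subset_support hyp hxp, hx,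
    r.dart_snd_mem_support_of_mem_darts hd⟩

end SimpleGraph.IsAcyclic

theorem RunningIntersection.connected_induce {V A : Type*} {G : SimpleGraph V}
    {ℓ : V → Finset A} (hRIP : RunningIntersection G ℓ) {a : A} {v : V} (hv : a ∈ ℓ v) :
    (G.induce {v : V | a ∈ ℓ v}).Connected :=
  (hRIP a).resolve_left (Set.nonempty_iff_ne_empty.mp ⟨v, hv⟩)

/-- Let `G` be a tree with a labeling `ℓ` satisfying the running intersection property,
let `W` induce a connected subgraph of `G`, and let `x₁, x₂` each occur in the label of
some vertex of `W`. If some vertex of `G` has both `x₁` and `x₂` in its label, then some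
vertex of `W` has both `x₁` and `x₂` in its label. -/
theorem stmt_11 {V A : Type*} (G : SimpleGraph V) (hG : G.IsTree)
    (ℓ : V → Finset A) (hRIP : RunningIntersection G ℓ)
    (W : Set V) (hW : (G.induce W).Connected)
    (x₁ x₂ : A)
    (h₁ : ∃ w ∈ W, x₁ ∈ ℓ w) (h₂ : ∃ w ∈ W, x₂ ∈ ℓ w)
    (hv : ∃ v : V, x₁ ∈ ℓ v ∧ x₂ ∈ ℓ v) :
    ∃ w ∈ W, x₁ ∈ ℓ w ∧ x₂ ∈ ℓ w := by
  obtain ⟨w₁, hw₁W, hw₁⟩ := h₁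
  obtain ⟨w₂, hw₂W, hw₂⟩ := h₂
  obtain ⟨v, hv₁, hv₂⟩ := hv
  obtain ⟨p, hp, -⟩ := hG.existsUnique_path v w₁
  obtain ⟨q, hq, -⟩ := hG.existsUnique_path v w₂
  obtain ⟨r, hr, -⟩ := hG.existsUnique_path w₁ w₂
  obtain ⟨m, hmp, hmq, hmr⟩ := hG.isAcyclic.exists_median hp hq hr
  exact ⟨m,
    hG.isAcyclic.support_subset_of_connected_induce hW hw₁W hw₂W hr m hmr,
    hG.isAcyclic.support_subset_of_connected_induce (hRIP.connected_induce hv₁) hv₁ hw₁ hp m hmp,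
    hG.isAcyclic.support_subset_of_connected_induce (hRIP.connected_induce hv₂) hv₂ hw₂ hq m hmq⟩
end

section
/- Let G be a tree on vertex set V, let ℓ : V → Finset A be a labeling satisfying the running intersection property, and let v₀ ∈ V. Then the set {u ∈ V : ℓ(v₀) ⊆ ℓ(u)}, which contains v₀, induces a connected subgraph of G. Consequently, if a fresh element y ∉ A is added to the label of exactly those vertices u with ℓ(v₀) ⊆ ℓ(u), the extended labeling into Finset (A ⊕ {y}) still satisfies the running intersection property. -/
/-!
In a tree the path between two vertices is unique, so it stays inside every connected
vertex set containing both ends. Hence an intersection of connected sets sharing a vertex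
is connected; `{u | ℓ v₀ ⊆ ℓ u}` is the intersection of the connected sets
`{u | a ∈ ℓ u}` over `a ∈ ℓ v₀`, all containing `v₀`. The fresh element then occurs exactly
on this connected set, and the occurrence sets of the old elements are unchanged.
-/

namespace SimpleGraph

variable {V : Type*} {G : SimpleGraph V}

theorem IsAcyclic.support_subset_of_reachable_induce (hG : G.IsAcyclic) {s : Set V}
    {u v : V} {hu : u ∈ s} {hv : v ∈ s} (h : (G.induce s).Reachable ⟨u, hu⟩ ⟨v, hv⟩)
    (p : G.Path u v) : {x | x ∈ p.1.support} ⊆ s := by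
  classical
  obtain ⟨q⟩ := h
  let q' : G.Walk u v := q.map (Embedding.induce s).toHom
  obtain rfl : q'.toPath = p := (hG.subsingleton_path u v).elim _ _
  intro x hx
  have hx' : x ∈ (q.map (Embedding.induce s).toHom).support :=
    q'.support_toPath_subset_support hx
  rw [Walk.support_map, List.mem_map] at hx'
  obtain ⟨⟨y, hy⟩, -, rfl⟩ := hx'
  exact hy

theorem IsTree.connected_induce_iInter (hG : G.IsTree) {ι : Sort*} {s : ι → Set V} {v₀ : V}
    (hv₀ : ∀ i, v₀ ∈ s i) (hs : ∀ i, (G.induce (s i)).Connected) :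
    (G.induce (⋂ i, s i)).Connected := by
  classical
  refine G.induce_connected_of_patches v₀ (Set.mem_iInter.2 hv₀) fun {v} hv => ?_
  let p : G.Path v₀ v := (hG.connected.preconnected v₀ v).some.toPath
  have hp : {x | x ∈ p.1.support} ⊆ ⋂ i, s i := Set.subset_iInter fun i =>
    hG.isAcyclic.support_subset_of_reachable_induce
      ((hs i).preconnected ⟨v₀, hv₀ i⟩ ⟨v, Set.mem_iInter.1 hv i⟩) p
  exact ⟨_, hp, p.1.start_mem_support, p.1.end_mem_support,
    p.1.connected_induce_support.preconnected _ _⟩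

end SimpleGraph

namespace RunningIntersection

variable {V A : Type*} {G : SimpleGraph V} {ℓ : V → Finset A}

theorem connected_induce_setOf_subset (hG : G.IsTree) (hRIP : RunningIntersection G ℓ)
    (v₀ : V) : (G.induce {u | ℓ v₀ ⊆ ℓ u}).Connected := by
  have hset : {u | ℓ v₀ ⊆ ℓ u} = ⋂ a : ℓ v₀, {u | (a : A) ∈ ℓ u} := by
    ext u
    simp [Finset.subset_iff]
  rw [hset]
  exact hG.connected_induce_iInter (v₀ := v₀) (fun a => a.2) fun a =>
    (hRIP a).resolve_left (Set.nonempty_iff_ne_empty.1 ⟨v₀, a.2⟩)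

theorem extend [DecidableEq A] {B : Type*} [DecidableEq B] (hRIP : RunningIntersection G ℓ)
    (b : B) {P : V → Prop} [DecidablePred P] (hP : (G.induce {u | P u}).Connected) :
    RunningIntersection G fun u =>
      (ℓ u).image Sum.inl ∪ (if P u then {(Sum.inr b : A ⊕ B)} else ∅) := by
  rintro (a | b')
  · have hset : {v | Sum.inl a ∈ (ℓ v).image Sum.inl ∪
        (if P v then {(Sum.inr b : A ⊕ B)} else ∅)} = {v | a ∈ ℓ v} := by
      ext v
      by_cases h : P v <;> simp [h]
    rw [hset]
    exact hRIP a
  · by_cases hb : b' = b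
    · subst hb
      have hset : {v | Sum.inr b' ∈ (ℓ v).image Sum.inl ∪
          (if P v then {(Sum.inr b' : A ⊕ B)} else ∅)} = {v | P v} := by
        ext v
        by_cases h : P v <;> simp [h]
      rw [hset]
      exact Or.inr hP
    · left
      ext v
      by_cases h : P v <;> simp [h, hb]

end RunningIntersection

/-- Let `G` be a tree with a labeling `ℓ` satisfying the running intersection property,
and let `v₀` be a vertex. Then the set of vertices whose label contains `ℓ v₀` contains
`v₀` and induces a connected subgraph of `G`; consequently, adding a fresh element
(`Sum.inr ()`) to the labels of exactly those vertices preserves the running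
intersection property. -/
theorem stmt_12 {V A : Type*} [DecidableEq A] (G : SimpleGraph V) (hG : G.IsTree)
    (ℓ : V → Finset A) (hRIP : RunningIntersection G ℓ) (v₀ : V) :
    (v₀ ∈ {u : V | ℓ v₀ ⊆ ℓ u} ∧ (G.induce {u : V | ℓ v₀ ⊆ ℓ u}).Connected) ∧
    RunningIntersection G (fun u : V =>
      (ℓ u).image Sum.inl ∪
        (if ℓ v₀ ⊆ ℓ u then {(Sum.inr () : A ⊕ Unit)} else ∅)) := by
  have hconn := hRIP.connected_induce_setOf_subset hG v₀
  exact ⟨⟨Finset.Subset.refl _, hconn⟩, hRIP.extend () hconn⟩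
end

section
/- Let G be a tree on vertex set V, let ℓ : V → Finset A be a labeling satisfying the running intersection property, let v₀ ∈ V, and let x₁ ∈ A be an element occurring in the label of at least one vertex. If for every a ∈ ℓ(v₀) there exists a vertex u ∈ V with {a, x₁} ⊆ ℓ(u), then there exists a vertex w ∈ V with ℓ(v₀) ∪ {x₁} ⊆ ℓ(w). -/
/-!
Let `u` be a vertex whose label contains `x₁` at minimal distance from `v₀`. In a forest the
vertex set of a connected induced subgraph contains every path between its vertices, and the
nearest vertex `u` of such a set is a gate: it lies on the path from `v₀` to every vertex of
the set. For `a ∈ ℓ v₀`, the path from `v₀` to a vertex labelled by both `a` and `x₁` therefore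
passes through `u` and stays among the vertices labelled by `a`, so `a ∈ ℓ u`.
-/

namespace SimpleGraph

variable {V : Type*} {G : SimpleGraph V}

lemma IsAcyclic.support_subset_of_induce_preconnected (hG : G.IsAcyclic) {S : Set V}
    (hS : (G.induce S).Preconnected) {a b : V} (ha : a ∈ S) (hb : b ∈ S)
    {p : G.Walk a b} (hp : p.IsPath) : ∀ z ∈ p.support, z ∈ S := by
  obtain ⟨q, hq⟩ := (hS ⟨a, ha⟩ ⟨b, hb⟩).exists_isPath
  have hpq : p.support = q.support.map Subtype.val :=
    congrArg (fun P : G.Path a b => P.1.support)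
      ((hG.subsingleton_path a b).elim ⟨p, hp⟩
        ⟨_, hq.map (f := (Embedding.induce S).toHom) Subtype.val_injective⟩) |>.trans
      (Walk.support_map _ q)
  intro z hz
  rw [hpq] at hz
  obtain ⟨z', -, rfl⟩ := List.mem_map.mp hz
  exact z'.2

lemma Walk.eq_of_mem_support_of_length_eq_dist {u v z : V} {p : G.Walk v u}
    (hp : p.length = G.dist v u) (hz : z ∈ p.support) (hdist : G.dist v u ≤ G.dist v z) :
    z = u := by
  classical
  have hsplit := congrArg Walk.length (p.take_spec hz)
  rw [Walk.length_append] at hsplit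
  have := dist_le (p.takeUntil z hz)
  exact Walk.eq_of_length_eq_zero (p := p.dropUntil z hz) (by omega)

lemma IsAcyclic.mem_support_of_forall_dist_le (hG : G.IsAcyclic) {S : Set V}
    (hS : (G.induce S).Preconnected) {v u s : V} (hu : u ∈ S) (hs : s ∈ S)
    (hmin : ∀ t ∈ S, G.dist v u ≤ G.dist v t) {q : G.Walk v s} (hq : q.IsPath) :
    u ∈ q.support := by
  have hreach : ∀ {x y}, x ∈ S → y ∈ S → G.Reachable x y := fun hx hy =>
    (hS ⟨_, hx⟩ ⟨_, hy⟩).map (Embedding.induce S).toHom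
  obtain ⟨p, hp⟩ := (Reachable.trans ⟨q⟩ (hreach hs hu)).exists_walk_length_eq_dist
  obtain ⟨r, hr⟩ := (hreach hu hs).exists_isPath
  have hrS := hG.support_subset_of_induce_preconnected hS hu hs hr
  have hu_tail : u ∉ r.support.tail := by
    have := hr.support_nodup
    rw [← Walk.cons_tail_support] at this
    exact (List.nodup_cons.mp this).1
  -- `p` meets `S` only in its endpoint `u`, so `p` followed by `r` is again a path.
  have hpr : (p.append r).IsPath := by
    rw [Walk.isPath_def, Walk.support_append, List.nodup_append]
    refine ⟨(p.isPath_of_length_eq_dist hp).support_nodup,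
      hr.support_nodup.sublist (List.tail_sublist _), fun x hx y hy hxy => hu_tail ?_⟩
    subst hxy
    exact Walk.eq_of_mem_support_of_length_eq_dist hp hx
      (hmin x (hrS x (List.mem_of_mem_tail hy))) ▸ hy
  have hq_eq : q = p.append r :=
    congrArg Subtype.val ((hG.subsingleton_path v s).elim ⟨q, hq⟩ ⟨_, hpr⟩)
  exact hq_eq ▸ (Walk.mem_support_append_iff p r).mpr (Or.inl p.end_mem_support)

end SimpleGraph

lemma RunningIntersection.preconnected {V A : Type*} {G : SimpleGraph V} {ℓ : V → Finset A}
    (hRIP : RunningIntersection G ℓ) {a : A} {v : V} (hv : a ∈ ℓ v) :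
    (G.induce {v | a ∈ ℓ v}).Preconnected :=
  ((hRIP a).resolve_left (Set.nonempty_iff_ne_empty.mp ⟨v, hv⟩)).preconnected

/-- Let `G` be a tree with a labeling `ℓ` satisfying the running intersection property,
let `v₀` be a vertex and `x₁` an element occurring in the label of some vertex. If for
every `a ∈ ℓ v₀` some vertex has both `a` and `x₁` in its label, then some vertex `w`
has `ℓ v₀ ∪ {x₁} ⊆ ℓ w`. -/
theorem stmt_13 {V A : Type*} [DecidableEq A] (G : SimpleGraph V) (hG : G.IsTree)
    (ℓ : V → Finset A) (hRIP : RunningIntersection G ℓ) (v₀ : V) (x₁ : A)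
    (hx₁ : ∃ u : V, x₁ ∈ ℓ u)
    (h : ∀ a ∈ ℓ v₀, ∃ u : V, a ∈ ℓ u ∧ x₁ ∈ ℓ u) :
    ∃ w : V, ℓ v₀ ∪ {x₁} ⊆ ℓ w := by
  obtain ⟨u₀, hu₀⟩ := hx₁
  obtain ⟨u, hu, hmin⟩ : ∃ u ∈ {v | x₁ ∈ ℓ v}, ∀ t ∈ {v | x₁ ∈ ℓ v}, G.dist v₀ u ≤ G.dist v₀ t :=
    ⟨_, Function.argminOn_mem _ _ ⟨u₀, hu₀⟩, fun t ht => Function.argminOn_le _ _ ht⟩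
  refine ⟨u, Finset.union_subset (fun a ha => ?_) (Finset.singleton_subset_iff.mpr hu)⟩
  obtain ⟨ua, haua, hxua⟩ := h a ha
  obtain ⟨q, hq⟩ := (hG.connected v₀ ua).exists_isPath
  have hu_mem : u ∈ q.support :=
    hG.isAcyclic.mem_support_of_forall_dist_le (hRIP.preconnected hu₀) hu hxua hmin hq
  exact hG.isAcyclic.support_subset_of_induce_preconnected (hRIP.preconnected ha) ha haua hq u
    hu_mem
end

section
/- Let V be a finite set of variables, y ∉ V a fresh variable, and r : V ∪ {y} → ℚ an injective rank function. Let Z ⊆ V be such that r(y) < r(z) for every z ∈ Z and r(v) < r(y) for every v ∈ V \ Z. Let E be a finite family of subsets of V such that every e ∈ E satisfies Z ⊆ e or e ∩ Z = ∅. Let A = {e ∈ E : e ∩ Z ≠ ∅}, and suppose there is φ ∈ A such that every element occurring in some member of A belongs to φ. If E has no disruptive trio with respect to r, then the family E' obtained from E by replacing φ with φ ∪ {y} has no disruptive trio with respect to r. -/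
/-!
Only the fresh variable `y` can create new neighborhoods, and its neighbors all lie in `φ`,
whose variables are pairwise neighbors through `φ ∪ {y}`. So a new trio must have `y` as an
end. Its middle `z` is ranked above `y`, hence `z ∈ Z`; the other end shares an atom with `z`,
that atom meets `Z` and is therefore contained in `φ`, and the two ends are neighbors after all.
-/

/-- Two distinct variables are neighbors w.r.t. a family `E` of atoms (finite sets of
variables) if some atom of `E` contains both. -/
def Neighbors {α : Type*} (E : Finset (Finset α)) (x₁ x₂ : α) : Prop :=
  x₁ ≠ x₂ ∧ ∃ e ∈ E, x₁ ∈ e ∧ x₂ ∈ e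

/-- A disruptive trio w.r.t. a family `E` of atoms and a rank function `r`: three
distinct variables `x₁, x₂, x₃` such that `x₁` and `x₂` each neighbor `x₃` but not each
other, and `x₃` succeeds both `x₁` and `x₂` in the order given by `r`. -/
def HasDisruptiveTrio {α : Type*} (E : Finset (Finset α)) (r : α → ℚ) : Prop :=
  ∃ x₁ x₂ x₃ : α, x₁ ≠ x₂ ∧ x₁ ≠ x₃ ∧ x₂ ≠ x₃ ∧
    Neighbors E x₁ x₃ ∧ Neighbors E x₂ x₃ ∧ ¬ Neighbors E x₁ x₂ ∧
    r x₁ < r x₃ ∧ r x₂ < r x₃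

namespace Neighbors

variable {α : Type*} {E E' : Finset (Finset α)} {a b : α}

theorem of_mem {e : Finset α} (he : e ∈ E) (ha : a ∈ e) (hb : b ∈ e) (hab : a ≠ b) :
    Neighbors E a b :=
  ⟨hab, e, he, ha, hb⟩

theorem symm (h : Neighbors E a b) : Neighbors E b a :=
  let ⟨hab, e, he, ha, hb⟩ := h
  ⟨hab.symm, e, he, hb, ha⟩

theorem mono (hEE' : ∀ e ∈ E, ∃ e' ∈ E', e ⊆ e') (h : Neighbors E a b) : Neighbors E' a b :=
  let ⟨hab, e, he, ha, hb⟩ := h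
  let ⟨e', he', hee'⟩ := hEE' e he
  ⟨hab, e', he', hee' ha, hee' hb⟩

end Neighbors

section ReplaceAtom

variable {α : Type*} [DecidableEq α] {E : Finset (Finset α)} {φ : Finset α} {y a b : α}

theorem neighbors_replace_of_neighbors (h : Neighbors E a b) :
    Neighbors (insert (insert y φ) (E.erase φ)) a b := by
  refine h.mono fun e he => ?_
  by_cases heφ : e = φ
  · exact ⟨insert y φ, Finset.mem_insert_self _ _, heφ ▸ Finset.subset_insert y e⟩
  · exact ⟨e, Finset.mem_insert_of_mem (Finset.mem_erase.mpr ⟨heφ, he⟩), subset_rfl⟩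

theorem neighbors_replace_of_mem (ha : a ∈ insert y φ) (hb : b ∈ insert y φ) (hab : a ≠ b) :
    Neighbors (insert (insert y φ) (E.erase φ)) a b :=
  .of_mem (Finset.mem_insert_self _ _) ha hb hab

theorem neighbors_of_neighbors_replace (hφE : φ ∈ E) (hay : a ≠ y) (hby : b ≠ y)
    (h : Neighbors (insert (insert y φ) (E.erase φ)) a b) : Neighbors E a b := by
  obtain ⟨hab, e, he, ha, hb⟩ := h
  rcases Finset.mem_insert.mp he with rfl | he
  · exact .of_mem hφE ((Finset.mem_insert.mp ha).resolve_left hay)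
      ((Finset.mem_insert.mp hb).resolve_left hby) hab
  · exact .of_mem (Finset.mem_of_mem_erase he) ha hb hab

theorem mem_of_neighbors_replace_fresh (hyE : ∀ e ∈ E, y ∉ e)
    (h : Neighbors (insert (insert y φ) (E.erase φ)) y b) : b ∈ φ := by
  obtain ⟨hyb, e, he, hye, hbe⟩ := h
  rcases Finset.mem_insert.mp he with rfl | he
  · exact (Finset.mem_insert.mp hbe).resolve_left hyb.symm
  · exact absurd hye (hyE e (Finset.mem_of_mem_erase he))

theorem neighbors_fresh_of_later_common_neighbor {V Z : Finset α} {r : α → ℚ} {x z : α}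
    (hyE : ∀ e ∈ E, y ∉ e) (hφV : φ ⊆ V) (hVy : ∀ v ∈ V \ Z, r v < r y) (hφE : φ ∈ E)
    (hcover : ∀ e ∈ E, (e ∩ Z).Nonempty → e ⊆ φ)
    (hyz : Neighbors (insert (insert y φ) (E.erase φ)) y z) (hrz : r y < r z)
    (hxz : Neighbors (insert (insert y φ) (E.erase φ)) x z) (hxy : x ≠ y) :
    Neighbors (insert (insert y φ) (E.erase φ)) x y := by
  have hzφ : z ∈ φ := mem_of_neighbors_replace_fresh hyE hyz
  have hzZ : z ∈ Z := by
    by_contra hzZ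
    exact (hVy z (Finset.mem_sdiff.mpr ⟨hφV hzφ, hzZ⟩)).not_gt hrz
  obtain ⟨-, e, he, hxe, hze⟩ :=
    neighbors_of_neighbors_replace hφE hxy hyz.1.symm hxz
  have hxφ : x ∈ φ := hcover e he ⟨z, Finset.mem_inter.mpr ⟨hze, hzZ⟩⟩ hxe
  exact neighbors_replace_of_mem (Finset.mem_insert_of_mem hxφ) (Finset.mem_insert_self _ _) hxy

end ReplaceAtom

theorem stmt_14_general {α : Type*} [DecidableEq α] (V : Finset α) (y : α) (hy : y ∉ V)
    (r : α → ℚ)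
    (Z : Finset α)
    (hVy : ∀ v ∈ V \ Z, r v < r y)
    (E : Finset (Finset α)) (hEV : ∀ e ∈ E, e ⊆ V)
    (φ : Finset α) (hφE : φ ∈ E)
    (hcover : ∀ e ∈ E, (e ∩ Z).Nonempty → e ⊆ φ)
    (hnd : ¬ HasDisruptiveTrio E r) :
    ¬ HasDisruptiveTrio (insert (insert y φ) (E.erase φ)) r := by
  have hyE : ∀ e ∈ E, y ∉ e := fun e he hye => hy (hEV e he hye)
  have close {x z : α} := neighbors_fresh_of_later_common_neighbor (x := x) (z := z)
    hyE (hEV φ hφE) hVy hφE hcover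
  rintro ⟨x₁, x₂, x₃, h12, h13, h23, n13, n23, hn12, hr1, hr2⟩
  by_cases h3 : x₃ = y
  · subst h3
    exact hn12 (neighbors_replace_of_mem
      (Finset.mem_insert_of_mem (mem_of_neighbors_replace_fresh hyE n13.symm))
      (Finset.mem_insert_of_mem (mem_of_neighbors_replace_fresh hyE n23.symm)) h12)
  by_cases h1 : x₁ = y
  · subst h1
    exact hn12 (close n13 hr1 n23 h12.symm).symm
  by_cases h2 : x₂ = y
  · subst h2
    exact hn12 (close n23 hr2 n13 h12)
  exact hnd ⟨x₁, x₂, x₃, h12, h13, h23, neighbors_of_neighbors_replace hφE h1 h3 n13,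
    neighbors_of_neighbors_replace hφE h2 h3 n23,
    fun h => hn12 (neighbors_replace_of_neighbors h), hr1, hr2⟩

/-- Let `V` be a finite set of variables, `y ∉ V` fresh, and `r` an injective rank
function on `V ∪ {y}`. Let `Z ⊆ V` consist exactly of the variables ranked after `y`
(all other variables of `V` are ranked before `y`). Let `E` be a family of subsets of
`V` each of which contains all of `Z` or none of it, and let `φ ∈ E` meet `Z` and
contain every variable occurring in an atom of `E` that meets `Z`. If `E` has no
disruptive trio w.r.t. `r`, then the family obtained from `E` by replacing `φ` with
`φ ∪ {y}` has no disruptive trio w.r.t. `r`. -/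
theorem stmt_14 {α : Type*} [DecidableEq α] (V : Finset α) (y : α) (hy : y ∉ V)
    (r : α → ℚ) (hr : Set.InjOn r (insert y (V : Set α)))
    (Z : Finset α) (hZV : Z ⊆ V)
    (hyZ : ∀ z ∈ Z, r y < r z) (hVy : ∀ v ∈ V \ Z, r v < r y)
    (E : Finset (Finset α)) (hEV : ∀ e ∈ E, e ⊆ V)
    (hsplit : ∀ e ∈ E, Z ⊆ e ∨ e ∩ Z = ∅)
    (φ : Finset α) (hφE : φ ∈ E) (hφZ : (φ ∩ Z).Nonempty)
    (hcover : ∀ e ∈ E, (e ∩ Z).Nonempty → e ⊆ φ)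
    (hnd : ¬ HasDisruptiveTrio E r) :
    ¬ HasDisruptiveTrio (insert (insert y φ) (E.erase φ)) r :=
  stmt_14_general V y hy r Z hVy E hEV φ hφE hcover hnd
end
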